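/- arXiv:1901.09174 — 4 statements merged into one kernel-verified Lean document; each statement's English description precedes it below -/
import Mathlib

section
/- (Second moment bound for the importance sampling estimator, real case.) Let N be a positive integer, λ_1, …, λ_N positive reals, α_1, …, α_N reals, and γ_0 > 0. Set σ_i = √(γ_0/(N λ_i)) and let ν be the product over i of the Gaussian measures on ℝ with mean −α_i and variance σ_i². Let L(z) = Π_{i=1}^N σ_i exp( (z_i + α_i)²/(2σ_i²) − z_i²/2 ). Then ∫_{ℝᴺ} 1{ Σ_{i=1}^N λ_i (z_i + α_i)² ≤ γ_0 } · L(z)² dν(z) ≤ (γ_0/N)^{N} · ( Π_{i=1}^N λ_i^{−1} ) · e^{N}. -/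
/-!
On the truncation region `∑ λᵢ (zᵢ + αᵢ)² ≤ γ₀` the likelihood ratio is bounded pointwise:
dropping the `−zᵢ²` terms, `L(z)² ≤ (∏ σᵢ²) exp (∑ (zᵢ + αᵢ)² / σᵢ²)`, and with
`σᵢ² = (γ₀ / N) / λᵢ` the exponent equals `(N / γ₀) ∑ λᵢ (zᵢ + αᵢ)² ≤ N`.
Since `ν` is a probability measure, the integral is at most this pointwise bound
`(∏ σᵢ²) eᴺ = (γ₀ / N)ᴺ (∏ λᵢ⁻¹) eᴺ`.
-/

open MeasureTheory ProbabilityTheory Real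

theorem MeasureTheory.integral_le_of_forall_abs_le {α : Type*} [MeasurableSpace α]
    {μ : Measure α} [IsProbabilityMeasure μ] {f : α → ℝ} {C : ℝ} (h : ∀ x, |f x| ≤ C) :
    ∫ x, f x ∂μ ≤ C :=
  (le_abs_self _).trans <| by
    simpa using norm_integral_le_of_norm_le_const (μ := μ)
      (ae_of_all _ fun x => (Real.norm_eq_abs (f x)).le.trans (h x))

section Likelihood

variable {ι : Type*} [Fintype ι]

theorem sq_prod_mul_exp (σ a : ι → ℝ) :
    (∏ i, σ i * exp (a i)) ^ 2 = (∏ i, σ i ^ 2) * exp (∑ i, 2 * a i) := by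
  rw [← Finset.prod_pow, exp_sum, ← Finset.prod_mul_distrib]
  refine Finset.prod_congr rfl fun i _ => ?_
  rw [mul_pow, ← exp_nat_mul]
  norm_num

theorem sq_prod_likelihood_le (σ α z : ι → ℝ) :
    (∏ i, σ i * exp ((z i + α i) ^ 2 / (2 * σ i ^ 2) - z i ^ 2 / 2)) ^ 2
      ≤ (∏ i, σ i ^ 2) * exp (∑ i, (z i + α i) ^ 2 / σ i ^ 2) := by
  rw [sq_prod_mul_exp]
  gcongr with i
  have hsplit : 2 * ((z i + α i) ^ 2 / (2 * σ i ^ 2) - z i ^ 2 / 2)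
      = (z i + α i) ^ 2 / σ i ^ 2 - z i ^ 2 := by
    rw [mul_sub, ← div_div, mul_div_cancel₀ _ two_ne_zero]
    ring
  linarith [sq_nonneg (z i)]

theorem sum_div_div_eq_sum_mul_div (c : ℝ) (lam w : ι → ℝ) :
    ∑ i, w i / (c / lam i) = (∑ i, lam i * w i) / c := by
  rw [Finset.sum_div]
  refine Finset.sum_congr rfl fun i _ => ?_
  rw [div_div_eq_mul_div, mul_comm]

theorem prod_div_eq_pow_mul_prod_inv (c : ℝ) (lam : ι → ℝ) :
    ∏ i, c / lam i = c ^ Fintype.card ι * ∏ i, (lam i)⁻¹ := by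
  simp only [div_eq_mul_inv, Finset.prod_mul_distrib, Finset.prod_const, Finset.card_univ]

end Likelihood

theorem importance_sampling_second_moment_bound_real_general
    (N : ℕ) (lam α σ : Fin N → ℝ) (hlam : ∀ i, 0 < lam i)
    (γ₀ : ℝ) (hγ₀ : 0 < γ₀)
    (hσ : ∀ i, σ i = Real.sqrt (γ₀ / (N * lam i)))
    (ν : Measure (Fin N → ℝ))
    (hν : ν = Measure.pi fun i => gaussianReal (-α i) (Real.toNNReal (σ i ^ 2)))
    (L : (Fin N → ℝ) → ℝ)
    (hL : L = fun z => ∏ i, σ i * Real.exp ((z i + α i) ^ 2 / (2 * σ i ^ 2)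
      - z i ^ 2 / 2)) :
    ∫ z : Fin N → ℝ,
        Set.indicator {z : Fin N → ℝ | ∑ i, lam i * (z i + α i) ^ 2 ≤ γ₀}
          (fun z => L z ^ 2) z ∂ν
      ≤ (γ₀ / N) ^ N * (∏ i, (lam i)⁻¹) * Real.exp N := by
  have hσsq : ∀ i, σ i ^ 2 = γ₀ / N / lam i := fun i => by
    rw [hσ i, sq_sqrt (by have := hlam i; positivity), div_div]
  have hprod : ∏ i, σ i ^ 2 = (γ₀ / N) ^ N * ∏ i, (lam i)⁻¹ := by
    simp only [hσsq, prod_div_eq_pow_mul_prod_inv, Fintype.card_fin]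
  have hL_sq_le : ∀ z, ∑ i, lam i * (z i + α i) ^ 2 ≤ γ₀ →
      L z ^ 2 ≤ (∏ i, σ i ^ 2) * exp N := by
    intro z hz
    subst hL
    refine (sq_prod_likelihood_le σ α z).trans ?_
    gcongr
    simp only [hσsq]
    calc ∑ i, (z i + α i) ^ 2 / (γ₀ / N / lam i)
        = (∑ i, lam i * (z i + α i) ^ 2) / (γ₀ / N) := sum_div_div_eq_sum_mul_div _ _ _
      _ = (∑ i, lam i * (z i + α i) ^ 2) * (N / γ₀) := by rw [div_eq_mul_inv, inv_div]
      _ ≤ γ₀ * (N / γ₀) := by gcongr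
      _ = N := mul_div_cancel₀ _ hγ₀.ne'
  subst hν
  rw [← hprod]
  refine integral_le_of_forall_abs_le fun z => ?_
  rw [abs_of_nonneg (Set.indicator_nonneg (fun z _ => sq_nonneg (L z)) z)]
  exact Set.indicator_apply_le' (hL_sq_le z) fun _ => by positivity

/-- Second moment bound for the importance sampling estimator
(real case): with `σᵢ = √(γ₀/(N λᵢ))` and biased measure `ν = ⊗ᵢ N(−αᵢ, σᵢ²)`,
`∫ 1{∑ λᵢ(zᵢ+αᵢ)² ≤ γ₀} L(z)² dν ≤ (γ₀/N)^N (∏ᵢ λᵢ⁻¹) e^N`. -/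
theorem importance_sampling_second_moment_bound_real
    (N : ℕ) (hN : 0 < N) (lam α σ : Fin N → ℝ) (hlam : ∀ i, 0 < lam i)
    (γ₀ : ℝ) (hγ₀ : 0 < γ₀)
    (hσ : ∀ i, σ i = Real.sqrt (γ₀ / (N * lam i)))
    (ν : Measure (Fin N → ℝ))
    (hν : ν = Measure.pi fun i => gaussianReal (-α i) (Real.toNNReal (σ i ^ 2)))
    (L : (Fin N → ℝ) → ℝ)
    (hL : L = fun z => ∏ i, σ i * Real.exp ((z i + α i) ^ 2 / (2 * σ i ^ 2)
      - z i ^ 2 / 2)) :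
    ∫ z : Fin N → ℝ,
        Set.indicator {z : Fin N → ℝ | ∑ i, lam i * (z i + α i) ^ 2 ≤ γ₀}
          (fun z => L z ^ 2) z ∂ν
      ≤ (γ₀ / N) ^ N * (∏ i, (lam i)⁻¹) * Real.exp N :=
  importance_sampling_second_moment_bound_real_general N lam α σ hlam γ₀ hγ₀ hσ ν hν L hL
end

section
/- (Proposition 2: bounded relative error of the importance sampling estimator, noncentral real case.) Let N be a positive integer, λ_1, …, λ_N positive reals, α_1, …, α_N reals, and for γ_0 > 0 set σ_i = √(γ_0/(N λ_i)), let ν_{γ_0} be the product over i of the Gaussian measures on ℝ with mean −α_i and variance σ_i², let L(z) = Π_{i=1}^N σ_i exp( (z_i + α_i)²/(2σ_i²) − z_i²/2 ), and let P(γ_0) = P( Σ_{i=1}^N λ_i (Z_i + α_i)² ≤ γ_0 ) for i.i.d. standard Gaussians Z_1, …, Z_N. Then limsup_{γ_0 → 0⁺} [ ∫_{ℝᴺ} 1{ Σ_i λ_i (z_i + α_i)² ≤ γ_0 } L(z)² dν_{γ_0}(z) ] / P(γ_0)² ≤ (π/2)^N · e^{N} · exp( Σ_{i=1}^N α_i²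 ); in particular this limsup is finite, so the importance sampling estimator has bounded relative error. -/
/-!
On the rare set `A = {z | ∑ λᵢ (zᵢ + αᵢ)² ≤ γ₀}` the exponent of the likelihood ratio is at most
`N / 2`, so, `ν_{γ₀}` being a probability measure, the second moment is at most `(∏ σᵢ)² e^N`.
The box `∏ [-αᵢ - σᵢ, -αᵢ + σᵢ]` lies in `A`, and on it the standard Gaussian density of the
`i`-th coordinate is at least `φ(|αᵢ| + σᵢ)`, so `P(γ₀) ≥ ∏ 2σᵢ φ(|αᵢ| + σᵢ)`. The `σᵢ` cancel in
the ratio, which is therefore at most `(π/2)^N e^N exp ∑ (|αᵢ| + σᵢ)²`; this tends to the claimed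
bound as `σᵢ → 0`.
-/

open MeasureTheory ProbabilityTheory Filter Real
open Set Topology

lemma gaussianPDFReal_zero_one_le_of_abs_le {x m : ℝ} (h : |x| ≤ m) :
    gaussianPDFReal 0 1 m ≤ gaussianPDFReal 0 1 x := by
  have hx : x ^ 2 ≤ m ^ 2 := sq_le_sq' (abs_le.mp h).1 (abs_le.mp h).2
  simp only [gaussianPDFReal, sub_zero, NNReal.coe_one, mul_one]
  gcongr

lemma ofReal_le_gaussianReal_Icc (c r : ℝ) :
    ENNReal.ofReal (2 * r * gaussianPDFReal 0 1 (|c| + r))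
      ≤ gaussianReal 0 1 (Icc (c - r) (c + r)) := by
  have hpdf : ∀ x ∈ Icc (c - r) (c + r),
      ENNReal.ofReal (gaussianPDFReal 0 1 (|c| + r)) ≤ gaussianPDF 0 1 x := by
    intro x hx
    refine ENNReal.ofReal_le_ofReal (gaussianPDFReal_zero_one_le_of_abs_le ?_)
    have : |x - c| ≤ r := abs_sub_le_iff.mpr ⟨by linarith [hx.2], by linarith [hx.1]⟩
    linarith [abs_sub_abs_le_abs_sub x c]
  calc ENNReal.ofReal (2 * r * gaussianPDFReal 0 1 (|c| + r))
      = ∫⁻ _ in Icc (c - r) (c + r), ENNReal.ofReal (gaussianPDFReal 0 1 (|c| + r)) := by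
        rw [setLIntegral_const, Real.volume_Icc,
          ← ENNReal.ofReal_mul (gaussianPDFReal_nonneg _ _ _)]
        congr 1
        ring
    _ ≤ ∫⁻ x in Icc (c - r) (c + r), gaussianPDF 0 1 x :=
        setLIntegral_mono' measurableSet_Icc hpdf
    _ = gaussianReal 0 1 (Icc (c - r) (c + r)) := (gaussianReal_apply 0 one_ne_zero _).symm

namespace ImportanceSampling

variable {ι : Type*} [Fintype ι] (lam α : ι → ℝ)

def rareSet (γ : ℝ) : Set (ι → ℝ) := {z | ∑ i, lam i * (z i + α i) ^ 2 ≤ γ}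

noncomputable def biasScale (γ : ℝ) (i : ι) : ℝ := √(γ / (Fintype.card ι * lam i))

noncomputable def likelihood (γ : ℝ) (z : ι → ℝ) : ℝ :=
  ∏ i, biasScale lam γ i *
    exp ((z i + α i) ^ 2 / (2 * biasScale lam γ i ^ 2) - z i ^ 2 / 2)

noncomputable def relErrorBound (γ : ℝ) : ℝ :=
  (π / 2) ^ Fintype.card ι * exp (Fintype.card ι) *
    exp (∑ i, (|α i| + biasScale lam γ i) ^ 2)

variable {lam} {γ : ℝ}

lemma biasScale_sq (hlam : ∀ i, 0 < lam i) (hγ : 0 ≤ γ) (i : ι) :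
    biasScale lam γ i ^ 2 = γ / (Fintype.card ι * lam i) :=
  sq_sqrt (div_nonneg hγ (mul_nonneg (Nat.cast_nonneg _) (hlam i).le))

lemma lam_mul_biasScale_sq (hlam : ∀ i, 0 < lam i) (hγ : 0 ≤ γ) (i : ι) :
    lam i * biasScale lam γ i ^ 2 = γ / Fintype.card ι := by
  have hcard : (0 : ℝ) < Fintype.card ι := Nat.cast_pos.mpr (Fintype.card_pos_iff.mpr ⟨i⟩)
  rw [biasScale_sq hlam hγ]
  field_simp [(hlam i).ne']

lemma biasScale_pos (hlam : ∀ i, 0 < lam i) (hγ : 0 < γ) (i : ι) : 0 < biasScale lam γ i := by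
  have hcard : (0 : ℝ) < Fintype.card ι := Nat.cast_pos.mpr (Fintype.card_pos_iff.mpr ⟨i⟩)
  exact sqrt_pos.mpr (div_pos hγ (mul_pos hcard (hlam i)))

lemma pi_Icc_biasScale_subset_rareSet (hlam : ∀ i, 0 < lam i) (hγ : 0 ≤ γ) :
    univ.pi (fun i => Icc (-α i - biasScale lam γ i) (-α i + biasScale lam γ i))
      ⊆ rareSet lam α γ := by
  intro z hz
  have hcoord : ∀ i, lam i * (z i + α i) ^ 2 ≤ γ / Fintype.card ι := fun i => by
    have hi := hz i (mem_univ i)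
    have habs : |z i + α i| ≤ biasScale lam γ i :=
      abs_le.mpr ⟨by linarith [hi.1], by linarith [hi.2]⟩
    rw [← lam_mul_biasScale_sq hlam hγ i]
    exact mul_le_mul_of_nonneg_left (sq_le_sq' (abs_le.mp habs).1 (abs_le.mp habs).2) (hlam i).le
  calc ∑ i, lam i * (z i + α i) ^ 2 ≤ ∑ _i : ι, γ / Fintype.card ι :=
        Finset.sum_le_sum fun i _ => hcoord i
    _ ≤ γ := by
        rw [Finset.sum_const, Finset.card_univ, nsmul_eq_mul]
        rcases Nat.eq_zero_or_pos (Fintype.card ι) with h | h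
        · simp [h, hγ]
        · rw [mul_div_cancel₀ _ (by positivity)]

lemma likelihood_le (hlam : ∀ i, 0 < lam i) (hγ : 0 < γ) {z : ι → ℝ}
    (hz : z ∈ rareSet lam α γ) :
    likelihood lam α γ z ≤ (∏ i, biasScale lam γ i) * exp (Fintype.card ι / 2) := by
  have hexponent : ∑ i, ((z i + α i) ^ 2 / (2 * biasScale lam γ i ^ 2) - z i ^ 2 / 2)
      ≤ (Fintype.card ι : ℝ) / 2 := by
    calc ∑ i, ((z i + α i) ^ 2 / (2 * biasScale lam γ i ^ 2) - z i ^ 2 / 2)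
        ≤ ∑ i, Fintype.card ι / (2 * γ) * (lam i * (z i + α i) ^ 2) := by
          refine Finset.sum_le_sum fun i _ => ?_
          have hcard : (0 : ℝ) < Fintype.card ι :=
            Nat.cast_pos.mpr (Fintype.card_pos_iff.mpr ⟨i⟩)
          calc _ ≤ (z i + α i) ^ 2 / (2 * biasScale lam γ i ^ 2) := sub_le_self _ (by positivity)
            _ = Fintype.card ι / (2 * γ) * (lam i * (z i + α i) ^ 2) := by
                rw [biasScale_sq hlam hγ.le]
                field_simp [(hlam i).ne', hγ.ne']
      _ = Fintype.card ι / (2 * γ) * ∑ i, lam i * (z i + α i) ^ 2 := (Finset.mul_sum ..).symm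
      _ ≤ Fintype.card ι / (2 * γ) * γ := by gcongr; exact hz
      _ = Fintype.card ι / 2 := by field_simp
  unfold likelihood
  rw [Finset.prod_mul_distrib, ← exp_sum]
  gcongr
  exact Finset.prod_nonneg fun i _ => sqrt_nonneg _

lemma integral_indicator_likelihood_sq_le (hlam : ∀ i, 0 < lam i) (hγ : 0 < γ)
    (μ : Measure (ι → ℝ)) [IsProbabilityMeasure μ] :
    ∫ z, (rareSet lam α γ).indicator (fun z => likelihood lam α γ z ^ 2) z ∂μ
      ≤ ((∏ i, biasScale lam γ i) * exp (Fintype.card ι / 2)) ^ 2 := by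
  have hL : ∀ z, 0 ≤ likelihood lam α γ z := fun z =>
    Finset.prod_nonneg fun i _ => mul_nonneg (sqrt_nonneg _) (exp_pos _).le
  calc ∫ z, (rareSet lam α γ).indicator (fun z => likelihood lam α γ z ^ 2) z ∂μ
      ≤ ∫ _, ((∏ i, biasScale lam γ i) * exp (Fintype.card ι / 2)) ^ 2 ∂μ := by
        refine integral_mono_of_nonneg (ae_of_all _ fun z => indicator_nonneg
          (fun _ _ => sq_nonneg _) z) (integrable_const _) (ae_of_all _ fun z => ?_)
        refine indicator_apply_le' (fun hz => ?_) fun _ => sq_nonneg _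
        exact pow_le_pow_left₀ (hL z) (likelihood_le α hlam hγ hz) 2
    _ = ((∏ i, biasScale lam γ i) * exp (Fintype.card ι / 2)) ^ 2 := by simp

lemma prod_le_measure_rareSet (hlam : ∀ i, 0 < lam i) (hγ : 0 ≤ γ) :
    ∏ i, 2 * biasScale lam γ i * gaussianPDFReal 0 1 (|α i| + biasScale lam γ i)
      ≤ (Measure.pi (fun _ : ι => gaussianReal 0 1) (rareSet lam α γ)).toReal := by
  calc ∏ i, 2 * biasScale lam γ i * gaussianPDFReal 0 1 (|α i| + biasScale lam γ i)
      ≤ ∏ i, (gaussianReal 0 1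
          (Icc (-α i - biasScale lam γ i) (-α i + biasScale lam γ i))).toReal := by
        refine Finset.prod_le_prod (fun i _ => ?_) fun i _ => ?_
        · exact mul_nonneg (mul_nonneg zero_le_two (sqrt_nonneg _)) (gaussianPDFReal_nonneg _ _ _)
        · rw [← ENNReal.ofReal_le_iff_le_toReal (measure_ne_top _ _), ← abs_neg (α i)]
          exact ofReal_le_gaussianReal_Icc _ _
    _ = (Measure.pi (fun _ : ι => gaussianReal 0 1)
          (univ.pi fun i => Icc (-α i - biasScale lam γ i) (-α i + biasScale lam γ i))).toReal := by
        rw [Measure.pi_pi, ENNReal.toReal_prod]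
    _ ≤ (Measure.pi (fun _ : ι => gaussianReal 0 1) (rareSet lam α γ)).toReal :=
        ENNReal.toReal_mono (measure_ne_top _ _)
          (measure_mono (pi_Icc_biasScale_subset_rareSet α hlam hγ))

lemma inv_two_mul_gaussianPDFReal_sq (m : ℝ) :
    (2 * gaussianPDFReal 0 1 m)⁻¹ ^ 2 = π / 2 * exp (m ^ 2) := by
  have hexp : exp (-m ^ 2 / 2) ^ 2 = (exp (m ^ 2))⁻¹ := by
    rw [← exp_nat_mul, ← exp_neg]; ring_nf
  simp only [gaussianPDFReal, sub_zero, NNReal.coe_one, mul_one, mul_pow, inv_pow, hexp,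
    sq_sqrt (by positivity : (0 : ℝ) ≤ 2 * π)]
  field_simp

lemma ratio_le_relErrorBound (hlam : ∀ i, 0 < lam i) (hγ : 0 < γ)
    (μ : Measure (ι → ℝ)) [IsProbabilityMeasure μ] :
    (∫ z, (rareSet lam α γ).indicator (fun z => likelihood lam α γ z ^ 2) z ∂μ) /
        (Measure.pi (fun _ : ι => gaussianReal 0 1) (rareSet lam α γ)).toReal ^ 2
      ≤ relErrorBound lam α γ := by
  set p : ι → ℝ := fun i => gaussianPDFReal 0 1 (|α i| + biasScale lam γ i)
  have hD : 0 < ∏ i, 2 * biasScale lam γ i * p i := Finset.prod_pos fun i _ =>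
    mul_pos (mul_pos two_pos (biasScale_pos hlam hγ i)) (gaussianPDFReal_pos _ _ _ one_ne_zero)
  calc _ ≤ ((∏ i, biasScale lam γ i) * exp (Fintype.card ι / 2)) ^ 2 /
        (∏ i, 2 * biasScale lam γ i * p i) ^ 2 :=
        div_le_div₀ (sq_nonneg _) (integral_indicator_likelihood_sq_le α hlam hγ μ)
          (pow_pos hD 2) (pow_le_pow_left₀ hD.le (prod_le_measure_rareSet α hlam hγ.le) 2)
    _ = (∏ i, (2 * p i)⁻¹ ^ 2) * exp (Fintype.card ι) := by
        have hratio : ∀ i, biasScale lam γ i / (2 * biasScale lam γ i * p i) = (2 * p i)⁻¹ :=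
          fun i => by field_simp [(biasScale_pos hlam hγ i).ne']
        rw [← div_pow, mul_div_right_comm, ← Finset.prod_div_distrib, mul_pow, ← exp_nat_mul,
          Finset.prod_pow]
        simp only [hratio]
        congr 2
        ring
    _ = relErrorBound lam α γ := by
        simp only [p, inv_two_mul_gaussianPDFReal_sq, Finset.prod_mul_distrib, Finset.prod_const,
          Finset.card_univ, ← exp_sum, relErrorBound]
        ring

lemma tendsto_relErrorBound :
    Tendsto (relErrorBound lam α) (𝓝 0)
      (𝓝 ((π / 2) ^ Fintype.card ι * exp (Fintype.card ι) * exp (∑ i, α i ^ 2))) := by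
  have hcont : Continuous (relErrorBound lam α) := by
    unfold relErrorBound biasScale
    fun_prop
  simpa [relErrorBound, biasScale] using hcont.tendsto 0

end ImportanceSampling

open ImportanceSampling

theorem bounded_relative_error_real_noncentral_general
    (N : ℕ) (lam α : Fin N → ℝ) (hlam : ∀ i, 0 < lam i)
    (σ : ℝ → Fin N → ℝ)
    (hσ : ∀ γ₀ i, σ γ₀ i = Real.sqrt (γ₀ / (N * lam i)))
    (ν : ℝ → Measure (Fin N → ℝ))
    (hν : ∀ γ₀, ν γ₀ =
      Measure.pi fun i => gaussianReal (-α i) (Real.toNNReal (σ γ₀ i ^ 2)))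
    (L : ℝ → (Fin N → ℝ) → ℝ)
    (hL : ∀ γ₀, L γ₀ = fun z => ∏ i, σ γ₀ i *
      Real.exp ((z i + α i) ^ 2 / (2 * σ γ₀ i ^ 2) - z i ^ 2 / 2))
    (P : ℝ → ℝ)
    (hP : ∀ γ₀, P γ₀ = ((Measure.pi fun _ : Fin N => gaussianReal 0 1)
      {z : Fin N → ℝ | ∑ i, lam i * (z i + α i) ^ 2 ≤ γ₀}).toReal) :
    Filter.limsup
      (fun γ₀ : ℝ =>
        (∫ z : Fin N → ℝ,
            Set.indicator {z : Fin N → ℝ | ∑ i, lam i * (z i + α i) ^ 2 ≤ γ₀}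
              (fun z => L γ₀ z ^ 2) z ∂(ν γ₀)) / P γ₀ ^ 2)
      (nhdsWithin 0 (Set.Ioi 0))
      ≤ (π / 2) ^ N * Real.exp N * Real.exp (∑ i, α i ^ 2) := by
  obtain rfl : σ = biasScale lam := by
    ext γ₀ i
    rw [hσ, biasScale, Fintype.card_fin]
  obtain rfl : L = likelihood lam α := funext hL
  have hlim := (tendsto_relErrorBound (lam := lam) α).mono_left
    (nhdsWithin_le_nhds (s := Ioi 0))
  refine (limsup_le_limsup (v := relErrorBound lam α) ?_ ?_ hlim.isBoundedUnder_le).trans_eq ?_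
  · filter_upwards [self_mem_nhdsWithin] with γ₀ hγ₀
    rw [hν, hP]
    exact ratio_le_relErrorBound α hlam hγ₀ _
  · exact isCoboundedUnder_le_of_le _ fun γ₀ => div_nonneg
      (integral_nonneg fun z => indicator_nonneg (fun _ _ => sq_nonneg _) z) (sq_nonneg _)
  · rw [hlim.limsup_eq, Fintype.card_fin]

/-- **Proposition 2.** Bounded relative error of the importance
sampling estimator (noncentral real case): with `σᵢ = √(γ₀/(N λᵢ))` and biased
measure `ν_{γ₀} = ⊗ᵢ N(−αᵢ, σᵢ²)`,
`limsup_{γ₀→0⁺} (∫ 1{∑ λᵢ(zᵢ+αᵢ)² ≤ γ₀} L(z)² dν_{γ₀}) / P(γ₀)²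
   ≤ (π/2)^N e^N exp(∑ᵢ αᵢ²)`, which is finite. -/
theorem bounded_relative_error_real_noncentral
    (N : ℕ) (hN : 0 < N) (lam α : Fin N → ℝ) (hlam : ∀ i, 0 < lam i)
    (σ : ℝ → Fin N → ℝ)
    (hσ : ∀ γ₀ i, σ γ₀ i = Real.sqrt (γ₀ / (N * lam i)))
    (ν : ℝ → Measure (Fin N → ℝ))
    (hν : ∀ γ₀, ν γ₀ =
      Measure.pi fun i => gaussianReal (-α i) (Real.toNNReal (σ γ₀ i ^ 2)))
    (L : ℝ → (Fin N → ℝ) → ℝ)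
    (hL : ∀ γ₀, L γ₀ = fun z => ∏ i, σ γ₀ i *
      Real.exp ((z i + α i) ^ 2 / (2 * σ γ₀ i ^ 2) - z i ^ 2 / 2))
    (P : ℝ → ℝ)
    (hP : ∀ γ₀, P γ₀ = ((Measure.pi fun _ : Fin N => gaussianReal 0 1)
      {z : Fin N → ℝ | ∑ i, lam i * (z i + α i) ^ 2 ≤ γ₀}).toReal) :
    Filter.limsup
      (fun γ₀ : ℝ =>
        (∫ z : Fin N → ℝ,
            Set.indicator {z : Fin N → ℝ | ∑ i, lam i * (z i + α i) ^ 2 ≤ γ₀}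
              (fun z => L γ₀ z ^ 2) z ∂(ν γ₀)) / P γ₀ ^ 2)
      (nhdsWithin 0 (Set.Ioi 0))
      ≤ (π / 2) ^ N * Real.exp N * Real.exp (∑ i, α i ^ 2) :=
  bounded_relative_error_real_noncentral_general N lam α hlam σ hσ ν hν L hL P hP
end

section
/- (Bounded relative error of the importance sampling estimator, central real case.) Let N be a positive integer and λ_1, …, λ_N positive reals. For γ_0 > 0 set σ_i = √(γ_0/(N λ_i)), let ν_{γ_0} be the product over i of the Gaussian measures on ℝ with mean 0 and variance σ_i², let L(z) = Π_{i=1}^N σ_i exp( z_i²/(2σ_i²) − z_i²/2 ), and let P(γ_0) = P( Σ_{i=1}^N λ_i Z_i² ≤ γ_0 ) for i.i.d. standard Gaussians Z_1, …, Z_N. Then limsup_{γ_0 → 0⁺} [ ∫_{ℝᴺ} 1{ Σ_i λ_i z_i² ≤ γ_0 } L(z)² dν_{γ_0}(z) ] / P(γ_0)² ≤ (π/2)^N · e^{N}; in particular this limsup is finite. -/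
open MeasureTheory ProbabilityTheory Filter Real

/-!
On the event `A = {∑ λᵢ zᵢ² ≤ γ₀}` one has `∑ zᵢ² / σᵢ² ≤ N`, so `L² ≤ (∏ σᵢ²) eᴺ` on `A` and the
second moment is at most `(∏ σᵢ²) eᴺ`. The box `∏ [-σᵢ, σᵢ]` lies in `A`, and the standard Gaussian
mass of `[-σ, σ]` is at least `2σ φ(σ)`, whence `P(γ₀)² ≥ (2/π)ᴺ (∏ σᵢ²) e^{-∑ σᵢ²}`. The factors
`∏ σᵢ²` cancel, leaving the bound `(π/2)ᴺ e^{N + ∑ σᵢ²}`, and `∑ σᵢ² → 0` as `γ₀ → 0⁺`.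
-/

lemma two_mul_mul_gaussianPDFReal_le_gaussianReal_Icc {s : ℝ} (hs : 0 ≤ s) :
    2 * s * gaussianPDFReal 0 1 s ≤ (gaussianReal 0 1 (Set.Icc (-s) s)).toReal := by
  have hpdf_ge : ∀ x ∈ Set.Icc (-s) s, gaussianPDFReal 0 1 s ≤ gaussianPDFReal 0 1 x := by
    intro x hx
    have : x ^ 2 ≤ s ^ 2 := sq_le_sq' hx.1 hx.2
    simp only [gaussianPDFReal, sub_zero]
    gcongr
  have hint := setIntegral_ge_of_const_le_real measurableSet_Icc
    (by simp [Real.volume_Icc]) hpdf_ge (integrable_gaussianPDFReal 0 1).integrableOn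
  rw [measureReal_def, Real.volume_Icc, ENNReal.toReal_ofReal (by linarith)] at hint
  rw [gaussianReal_apply_eq_integral 0 one_ne_zero, ENNReal.toReal_ofReal
    (setIntegral_nonneg measurableSet_Icc fun x _ => gaussianPDFReal_nonneg 0 1 x)]
  linarith

lemma sq_gaussianPDFReal_zero_one (x : ℝ) :
    gaussianPDFReal 0 1 x ^ 2 = (2 * π)⁻¹ * exp (-x ^ 2) := by
  rw [gaussianPDFReal, mul_pow, inv_pow, NNReal.coe_one, mul_one,
    Real.sq_sqrt (by positivity), ← Real.exp_nat_mul]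
  congr 2
  push_cast
  ring

lemma mul_exp_le_sq_gaussianReal_Icc {s : ℝ} (hs : 0 ≤ s) :
    2 / π * s ^ 2 * exp (-s ^ 2) ≤ (gaussianReal 0 1 (Set.Icc (-s) s)).toReal ^ 2 := by
  calc 2 / π * s ^ 2 * exp (-s ^ 2) = (2 * s * gaussianPDFReal 0 1 s) ^ 2 := by
        rw [mul_pow, sq_gaussianPDFReal_zero_one]
        field_simp
    _ ≤ _ := pow_le_pow_left₀ (by have := gaussianPDFReal_nonneg 0 1 s; positivity)
        (two_mul_mul_gaussianPDFReal_le_gaussianReal_Icc hs) 2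

lemma sq_prod_mul_exp_le {ι : Type*} [Fintype ι] (s z : ι → ℝ) {K : ℝ}
    (hz : ∑ i, z i ^ 2 / s i ^ 2 ≤ K) :
    (∏ i, s i * exp (z i ^ 2 / (2 * s i ^ 2) - z i ^ 2 / 2)) ^ 2
      ≤ (∏ i, s i ^ 2) * exp K := by
  have hsq : (∏ i, s i * exp (z i ^ 2 / (2 * s i ^ 2) - z i ^ 2 / 2)) ^ 2
      = (∏ i, s i ^ 2) * exp (∑ i, (z i ^ 2 / s i ^ 2 - z i ^ 2)) := by
    rw [← Finset.prod_pow, Real.exp_sum, ← Finset.prod_mul_distrib]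
    refine Finset.prod_congr rfl fun i _ => ?_
    rw [mul_pow, ← Real.exp_nat_mul]
    congr 2
    ring
  have hexp : ∑ i, (z i ^ 2 / s i ^ 2 - z i ^ 2) ≤ K := by
    refine le_trans (Finset.sum_le_sum fun i _ => ?_) hz
    linarith [sq_nonneg (z i)]
  rw [hsq]
  gcongr

lemma integral_indicator_sq_prod_mul_exp_le {ι : Type*} [Fintype ι]
    (ν : Measure (ι → ℝ)) [IsProbabilityMeasure ν] (s : ι → ℝ) {A : Set (ι → ℝ)} {K : ℝ}
    (hA : ∀ z ∈ A, ∑ i, z i ^ 2 / s i ^ 2 ≤ K) :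
    ∫ z, A.indicator (fun z => (∏ i, s i * exp (z i ^ 2 / (2 * s i ^ 2) - z i ^ 2 / 2)) ^ 2) z ∂ν
      ≤ (∏ i, s i ^ 2) * exp K := by
  have hC : 0 ≤ (∏ i, s i ^ 2) * exp K :=
    mul_nonneg (Finset.prod_nonneg fun i _ => sq_nonneg _) (exp_nonneg _)
  have hbound := norm_integral_le_of_norm_le_const (μ := ν) (C := (∏ i, s i ^ 2) * exp K)
    (f := A.indicator fun z => (∏ i, s i * exp (z i ^ 2 / (2 * s i ^ 2) - z i ^ 2 / 2)) ^ 2)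
    (ae_of_all _ fun z => by
      rw [Real.norm_eq_abs, abs_of_nonneg (Set.indicator_nonneg (fun _ _ => sq_nonneg _) z)]
      by_cases hz : z ∈ A
      · rw [Set.indicator_of_mem hz]
        exact sq_prod_mul_exp_le s z (hA z hz)
      · rw [Set.indicator_of_notMem hz]
        exact hC)
  rw [probReal_univ, mul_one] at hbound
  exact (le_abs_self _).trans hbound

lemma mul_exp_le_sq_gaussianPi_sublevel {ι : Type*} [Fintype ι] (lam s : ι → ℝ)
    (hlam : ∀ i, 0 ≤ lam i) (hs : ∀ i, 0 ≤ s i) {γ : ℝ} (hγ : ∑ i, lam i * s i ^ 2 ≤ γ) :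
    (2 / π) ^ Fintype.card ι * ((∏ i, s i ^ 2) * exp (-∑ i, s i ^ 2))
      ≤ ((Measure.pi fun _ : ι => gaussianReal 0 1)
          {z : ι → ℝ | ∑ i, lam i * z i ^ 2 ≤ γ}).toReal ^ 2 := by
  have hbox : Set.univ.pi (fun i => Set.Icc (-s i) (s i))
      ⊆ {z : ι → ℝ | ∑ i, lam i * z i ^ 2 ≤ γ} := by
    intro z hz
    refine le_trans (Finset.sum_le_sum fun i _ => ?_) hγ
    have hzi := Set.mem_univ_pi.1 hz i
    exact mul_le_mul_of_nonneg_left (sq_le_sq' hzi.1 hzi.2) (hlam i)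
  have hmono := ENNReal.toReal_mono (measure_ne_top _ _)
    (measure_mono (μ := Measure.pi fun _ : ι => gaussianReal 0 1) hbox)
  rw [Measure.pi_pi, ENNReal.toReal_prod] at hmono
  calc (2 / π) ^ Fintype.card ι * ((∏ i, s i ^ 2) * exp (-∑ i, s i ^ 2))
      = ∏ i, 2 / π * s i ^ 2 * exp (-s i ^ 2) := by
        rw [Finset.prod_mul_distrib, Finset.prod_mul_distrib, Finset.prod_const,
          Finset.card_univ, ← Real.exp_sum, Finset.sum_neg_distrib, mul_assoc]
    _ ≤ ∏ i, (gaussianReal 0 1 (Set.Icc (-s i) (s i))).toReal ^ 2 :=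
        Finset.prod_le_prod (fun i _ => by positivity)
          fun i _ => mul_exp_le_sq_gaussianReal_Icc (hs i)
    _ ≤ _ := by
        rw [Finset.prod_pow]
        exact pow_le_pow_left₀ (Finset.prod_nonneg fun i _ => ENNReal.toReal_nonneg) hmono 2

lemma second_moment_div_sq_probability_le {N : ℕ} (lam : Fin N → ℝ) (hlam : ∀ i, 0 < lam i)
    {γ : ℝ} (hγ : 0 < γ) (s : Fin N → ℝ) (hs0 : ∀ i, 0 ≤ s i) (hs : ∀ i, s i ^ 2 = γ / (N * lam i))
    (ν : Measure (Fin N → ℝ)) [IsProbabilityMeasure ν] :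
    (∫ z, {z : Fin N → ℝ | ∑ i, lam i * z i ^ 2 ≤ γ}.indicator
        (fun z => (∏ i, s i * exp (z i ^ 2 / (2 * s i ^ 2) - z i ^ 2 / 2)) ^ 2) z ∂ν)
      / ((Measure.pi fun _ : Fin N => gaussianReal 0 1)
          {z : Fin N → ℝ | ∑ i, lam i * z i ^ 2 ≤ γ}).toReal ^ 2
      ≤ (π / 2) ^ N * exp (N + ∑ i, s i ^ 2) := by
  have hNlam : ∀ i : Fin N, 0 < (N : ℝ) * lam i :=
    fun i => mul_pos (Nat.cast_pos.2 i.pos) (hlam i)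
  have hlam_s : ∀ i, lam i * s i ^ 2 = γ / N := fun i => by
    rw [hs i]
    field_simp [(hlam i).ne', (Nat.cast_pos.2 i.pos).ne']
  have hsublevel : ∀ z ∈ {z : Fin N → ℝ | ∑ i, lam i * z i ^ 2 ≤ γ},
      ∑ i, z i ^ 2 / s i ^ 2 ≤ N := by
    intro z hz
    calc ∑ i, z i ^ 2 / s i ^ 2 = N / γ * ∑ i, lam i * z i ^ 2 := by
          rw [Finset.mul_sum]
          refine Finset.sum_congr rfl fun i _ => ?_
          rw [hs i]
          field_simp [(hNlam i).ne']
      _ ≤ N / γ * γ := by gcongr; exact hz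
      _ = N := div_mul_cancel₀ _ hγ.ne'
  have hbox : ∑ i, lam i * s i ^ 2 ≤ γ := by
    rcases Nat.eq_zero_or_pos N with rfl | hN
    · simpa using hγ.le
    · simp [hlam_s, mul_div_cancel₀ γ (Nat.cast_pos.2 hN).ne']
  have hprod : 0 < ∏ i, s i ^ 2 :=
    Finset.prod_pos fun i _ => by rw [hs i]; exact div_pos hγ (hNlam i)
  have hD : 0 < (2 / π) ^ N * ((∏ i, s i ^ 2) * exp (-∑ i, s i ^ 2)) := by positivity
  have hP := mul_exp_le_sq_gaussianPi_sublevel lam s (fun i => (hlam i).le) hs0 hbox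
  rw [Fintype.card_fin] at hP
  refine (div_le_div₀ (by positivity) (integral_indicator_sq_prod_mul_exp_le ν s hsublevel)
    hD hP).trans_eq ?_
  rw [exp_add, exp_neg, div_pow]
  field_simp [hprod.ne']
  rw [div_pow, mul_div_cancel₀ _ (by positivity)]

theorem bounded_relative_error_real_central_general
    (N : ℕ) (lam : Fin N → ℝ) (hlam : ∀ i, 0 < lam i)
    (σ : ℝ → Fin N → ℝ)
    (hσ : ∀ γ₀ i, σ γ₀ i = Real.sqrt (γ₀ / (N * lam i)))
    (ν : ℝ → Measure (Fin N → ℝ))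
    (hν : ∀ γ₀, ν γ₀ =
      Measure.pi fun i => gaussianReal 0 (Real.toNNReal (σ γ₀ i ^ 2)))
    (L : ℝ → (Fin N → ℝ) → ℝ)
    (hL : ∀ γ₀, L γ₀ = fun z => ∏ i, σ γ₀ i *
      Real.exp (z i ^ 2 / (2 * σ γ₀ i ^ 2) - z i ^ 2 / 2))
    (P : ℝ → ℝ)
    (hP : ∀ γ₀, P γ₀ = ((Measure.pi fun _ : Fin N => gaussianReal 0 1)
      {z : Fin N → ℝ | ∑ i, lam i * z i ^ 2 ≤ γ₀}).toReal) :
    Filter.limsup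
      (fun γ₀ : ℝ =>
        (∫ z : Fin N → ℝ,
            Set.indicator {z : Fin N → ℝ | ∑ i, lam i * z i ^ 2 ≤ γ₀}
              (fun z => L γ₀ z ^ 2) z ∂(ν γ₀)) / P γ₀ ^ 2)
      (nhdsWithin 0 (Set.Ioi 0))
      ≤ (π / 2) ^ N * Real.exp N := by
  have hratio : ∀ γ₀ ∈ Set.Ioi (0 : ℝ),
      (∫ z, {z : Fin N → ℝ | ∑ i, lam i * z i ^ 2 ≤ γ₀}.indicator
        (fun z => L γ₀ z ^ 2) z ∂(ν γ₀)) / P γ₀ ^ 2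
        ≤ (π / 2) ^ N * exp (N + ∑ i, γ₀ / (N * lam i)) := by
    intro γ₀ hγ₀
    have : IsProbabilityMeasure (ν γ₀) := by rw [hν]; infer_instance
    have hσ_sq : ∀ i, σ γ₀ i ^ 2 = γ₀ / (N * lam i) := fun i => by
      rw [hσ, sq_sqrt (div_nonneg (le_of_lt hγ₀) (mul_nonneg N.cast_nonneg (hlam i).le))]
    rw [hL, hP, ← Finset.sum_congr rfl fun i _ => hσ_sq i]
    exact second_moment_div_sq_probability_le lam hlam hγ₀ (σ γ₀)
      (fun i => hσ γ₀ i ▸ sqrt_nonneg _) hσ_sq (ν γ₀)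
  have hlim : Tendsto (fun γ₀ => (π / 2) ^ N * exp (N + ∑ i, γ₀ / (N * lam i)))
      (nhdsWithin 0 (Set.Ioi 0)) (nhds ((π / 2) ^ N * exp N)) := by
    have hcont : Continuous fun γ₀ => (π / 2) ^ N * exp (N + ∑ i, γ₀ / (N * lam i)) := by
      fun_prop
    simpa using hcont.continuousWithinAt.tendsto (x := 0) (s := Set.Ioi 0)
  refine (limsup_le_limsup (eventually_nhdsWithin_of_forall hratio) ?_
    hlim.isBoundedUnder_le).trans hlim.limsup_eq.le
  exact isCoboundedUnder_le_of_le _ fun γ₀ => div_nonneg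
    (integral_nonneg fun z => Set.indicator_nonneg (fun _ _ => sq_nonneg _) z) (sq_nonneg _)

/-- Bounded relative error of the importance sampling estimator
(central real case): with `σᵢ = √(γ₀/(N λᵢ))` and biased measure
`ν_{γ₀} = ⊗ᵢ N(0, σᵢ²)`,
`limsup_{γ₀→0⁺} (∫ 1{∑ λᵢ zᵢ² ≤ γ₀} L(z)² dν_{γ₀}) / P(γ₀)² ≤ (π/2)^N e^N`. -/
theorem bounded_relative_error_real_central
    (N : ℕ) (hN : 0 < N) (lam : Fin N → ℝ) (hlam : ∀ i, 0 < lam i)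
    (σ : ℝ → Fin N → ℝ)
    (hσ : ∀ γ₀ i, σ γ₀ i = Real.sqrt (γ₀ / (N * lam i)))
    (ν : ℝ → Measure (Fin N → ℝ))
    (hν : ∀ γ₀, ν γ₀ =
      Measure.pi fun i => gaussianReal 0 (Real.toNNReal (σ γ₀ i ^ 2)))
    (L : ℝ → (Fin N → ℝ) → ℝ)
    (hL : ∀ γ₀, L γ₀ = fun z => ∏ i, σ γ₀ i *
      Real.exp (z i ^ 2 / (2 * σ γ₀ i ^ 2) - z i ^ 2 / 2))
    (P : ℝ → ℝ)
    (hP : ∀ γ₀, P γ₀ = ((Measure.pi fun _ : Fin N => gaussianReal 0 1)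
      {z : Fin N → ℝ | ∑ i, lam i * z i ^ 2 ≤ γ₀}).toReal) :
    Filter.limsup
      (fun γ₀ : ℝ =>
        (∫ z : Fin N → ℝ,
            Set.indicator {z : Fin N → ℝ | ∑ i, lam i * z i ^ 2 ≤ γ₀}
              (fun z => L γ₀ z ^ 2) z ∂(ν γ₀)) / P γ₀ ^ 2)
      (nhdsWithin 0 (Set.Ioi 0))
      ≤ (π / 2) ^ N * Real.exp N :=
  bounded_relative_error_real_central_general N lam hlam σ hσ ν hν L hL P hP
end

section
/- (Second moment bound for the importance sampling estimator, complex central case.) Let N be a positive integer, λ_1, …, λ_N positive reals, and γ_0 > 0. Set σ_i² = γ_0/(N λ_i) and let ν be the product over i of the exponential measures on [0,∞) with rate 1/σ_i². Let L(w) = Π_{i=1}^N σ_i² e^{ (1/σ_i² − 1) w_i }. Then ∫ 1{ Σ_{i=1}^N λ_i w_i ≤ γ_0 } · L(w)² dν(w) ≤ (γ_0/N)^{2N} · ( Π_{i=1}^N λ_i^{−2} ) · e^{2N}. -/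
open MeasureTheory ProbabilityTheory

/-! On the support of `ν` every coordinate is nonnegative, so dropping the `-wᵢ` in the
exponent of `L` gives `L(w)² ≤ (∏ σᵢ⁴) exp (2 ∑ wᵢ / σᵢ²) = (∏ σᵢ⁴) exp (2 N/γ₀ ∑ λᵢ wᵢ)`,
which on the event `∑ λᵢ wᵢ ≤ γ₀` is at most the claimed constant. As `ν` is a probability
measure, the integral obeys the same bound. -/

theorem ae_nonneg_expMeasure (r : ℝ) : ∀ᵐ x ∂expMeasure r, 0 ≤ x := by
  simp only [ae_iff, not_le]
  exact (withDensity_apply _ measurableSet_Iio).trans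
    (lintegral_exponentialPDF_of_nonpos le_rfl)

theorem ae_nonneg_pi_expMeasure {ι : Type*} [Fintype ι] {r : ι → ℝ} (hr : ∀ i, 0 < r i) :
    ∀ᵐ w ∂Measure.pi (fun i => expMeasure (r i)), ∀ i, 0 ≤ w i :=
  have := fun i => isProbabilityMeasure_expMeasure (hr i)
  Filter.eventually_all.2 fun _ => Measure.tendsto_eval_ae_ae.eventually (ae_nonneg_expMeasure _)

theorem integral_le_of_ae_norm_le {α : Type*} [MeasurableSpace α] {μ : Measure α}
    [IsProbabilityMeasure μ] {f : α → ℝ} {C : ℝ} (h : ∀ᵐ x ∂μ, ‖f x‖ ≤ C) :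
    ∫ x, f x ∂μ ≤ C := by
  simpa using (Real.le_norm_self _).trans (norm_integral_le_of_norm_le_const h)

theorem sq_prod_mul_exp_le_s14 {ι : Type*} [Fintype ι] {σ w : ι → ℝ} (hσ : ∀ i, 0 ≤ σ i)
    (hw : ∀ i, 0 ≤ w i) :
    (∏ i, σ i * Real.exp ((1 / σ i - 1) * w i)) ^ 2
      ≤ (∏ i, σ i ^ 2) * Real.exp (2 * ∑ i, w i / σ i) := by
  have hfactor_nonneg : ∀ i ∈ Finset.univ, 0 ≤ σ i * Real.exp ((1 / σ i - 1) * w i) :=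
    fun i _ => mul_nonneg (hσ i) (Real.exp_pos _).le
  have hle : ∏ i, σ i * Real.exp ((1 / σ i - 1) * w i) ≤ ∏ i, σ i * Real.exp (w i / σ i) :=
    Finset.prod_le_prod hfactor_nonneg fun i _ => by
      have hexponent : (1 / σ i - 1) * w i = w i / σ i - w i := by ring
      gcongr
      · exact hσ i
      · linarith [hw i]
  calc _ ≤ (∏ i, σ i * Real.exp (w i / σ i)) ^ 2 :=
        pow_le_pow_left₀ (Finset.prod_nonneg hfactor_nonneg) hle 2
    _ = _ := by
        rw [Finset.prod_mul_distrib, ← Real.exp_sum, mul_pow, ← Finset.prod_pow,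
          ← Real.exp_nat_mul]
        push_cast
        ring_nf

theorem prod_div_mul_sq {ι : Type*} [Fintype ι] (c a : ℝ) (lam : ι → ℝ) :
    ∏ i, (c / (a * lam i)) ^ 2 = (c / a) ^ (2 * Fintype.card ι) * ∏ i, (lam i)⁻¹ ^ 2 := by
  rw [pow_mul, ← Finset.card_univ, ← Finset.prod_const, ← Finset.prod_mul_distrib]
  exact Finset.prod_congr rfl fun i _ => by ring

theorem sum_div_div_mul {ι : Type*} [Fintype ι] (c a : ℝ) (lam w : ι → ℝ) :
    ∑ i, w i / (c / (a * lam i)) = a / c * ∑ i, lam i * w i := by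
  rw [Finset.mul_sum]
  exact Finset.sum_congr rfl fun i _ => by rw [div_div_eq_mul_div]; ring

theorem importance_sampling_second_moment_bound_complex_general
    (N : ℕ) (lam σsq : Fin N → ℝ) (hlam : ∀ i, 0 < lam i)
    (γ₀ : ℝ) (hγ₀ : 0 < γ₀)
    (hσsq : ∀ i, σsq i = γ₀ / (N * lam i))
    (ν : Measure (Fin N → ℝ))
    (hν : ν = Measure.pi fun i => expMeasure (1 / σsq i))
    (L : (Fin N → ℝ) → ℝ)
    (hL : L = fun w => ∏ i, σsq i * Real.exp ((1 / σsq i - 1) * w i)) :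
    ∫ w : Fin N → ℝ,
        Set.indicator {w : Fin N → ℝ | ∑ i, lam i * w i ≤ γ₀}
          (fun w => L w ^ 2) w ∂ν
      ≤ (γ₀ / N) ^ (2 * N) * (∏ i, (lam i)⁻¹ ^ 2) * Real.exp (2 * N) := by
  obtain rfl : σsq = fun i => γ₀ / (N * lam i) := funext hσsq
  subst hν hL
  have hσ : ∀ i : Fin N, 0 < γ₀ / (N * lam i) := fun i => by
    have := i.pos
    have := hlam i
    positivity
  have hrate : ∀ i : Fin N, 0 < 1 / (γ₀ / (N * lam i)) := fun i => one_div_pos.2 (hσ i)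
  have := fun i => isProbabilityMeasure_expMeasure (hrate i)
  refine integral_le_of_ae_norm_le ?_
  filter_upwards [ae_nonneg_pi_expMeasure hrate] with w hw
  rw [Real.norm_of_nonneg (Set.indicator_nonneg (fun _ _ => sq_nonneg _) _)]
  refine Set.indicator_apply_le' (fun hmem => ?_) fun _ => by positivity
  calc _ ≤ _ := sq_prod_mul_exp_le_s14 (fun i => (hσ i).le) hw
    _ = (γ₀ / N) ^ (2 * N) * (∏ i, (lam i)⁻¹ ^ 2)
          * Real.exp (2 * (N / γ₀ * ∑ i, lam i * w i)) := by
        rw [prod_div_mul_sq, sum_div_div_mul, Fintype.card_fin]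
    _ ≤ _ := by
        have hexponent : (N : ℝ) / γ₀ * ∑ i, lam i * w i ≤ N := by
          calc _ ≤ (N : ℝ) / γ₀ * γ₀ := by gcongr; exact hmem
            _ = N := div_mul_cancel₀ _ hγ₀.ne'
        gcongr

/-- Second moment bound for the importance sampling estimator
(complex central case): with `σᵢ² = γ₀/(N λᵢ)` and biased measure
`ν = ⊗ᵢ Exp(1/σᵢ²)`,
`∫ 1{∑ λᵢ wᵢ ≤ γ₀} L(w)² dν ≤ (γ₀/N)^{2N} (∏ᵢ λᵢ⁻²) e^{2N}`. -/
theorem importance_sampling_second_moment_bound_complex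
    (N : ℕ) (hN : 0 < N) (lam σsq : Fin N → ℝ) (hlam : ∀ i, 0 < lam i)
    (γ₀ : ℝ) (hγ₀ : 0 < γ₀)
    (hσsq : ∀ i, σsq i = γ₀ / (N * lam i))
    (ν : Measure (Fin N → ℝ))
    (hν : ν = Measure.pi fun i => expMeasure (1 / σsq i))
    (L : (Fin N → ℝ) → ℝ)
    (hL : L = fun w => ∏ i, σsq i * Real.exp ((1 / σsq i - 1) * w i)) :
    ∫ w : Fin N → ℝ,
        Set.indicator {w : Fin N → ℝ | ∑ i, lam i * w i ≤ γ₀}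
          (fun w => L w ^ 2) w ∂ν
      ≤ (γ₀ / N) ^ (2 * N) * (∏ i, (lam i)⁻¹ ^ 2) * Real.exp (2 * N) :=
  importance_sampling_second_moment_bound_complex_general N lam σsq hlam γ₀ hγ₀ hσsq ν hν L hL
end
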